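/- Let E : M → B(S) be a quantum channel and let (π₁, V₁, H₁) and (π₂, V₂, H₂) be two Stinespring triples for E, with U : H₁ → H₂ a partial isometry satisfying UV₁ = V₂, U*V₂ = V₁ and Uπ₁(X) = π₂(X)U for all X ∈ M. Then C_U(π₁(M)') ⊆ π₂(M)' and C_{U*}(π₂(M)') ⊆ π₁(M)', and the corresponding complementary channels F₁ = E^c_{π₁,V₁,H₁} and F₂ = E^c_{π₂,V₂,H₂} satisfy F₁ = F₂∘C_U and F₂ = F₁∘C_{U*}. -/

import Mathlib

open scoped ComplexOrder
open ContinuousLinearMap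

noncomputable section

namespace QPC

/-- A bundled complex Hilbert space. -/
structure HilbertSpace where
  carrier : Type
  [nacg : NormedAddCommGroup carrier]
  [ipc : InnerProductSpace ℂ carrier]
  [cs : CompleteSpace carrier]

attribute [instance] HilbertSpace.nacg HilbertSpace.ipc HilbertSpace.cs

instance : CoeSort HilbertSpace Type := ⟨HilbertSpace.carrier⟩

variable {H K S S' : Type*}
  [NormedAddCommGroup H] [InnerProductSpace ℂ H] [CompleteSpace H]
  [NormedAddCommGroup K] [InnerProductSpace ℂ K] [CompleteSpace K]
  [NormedAddCommGroup S] [InnerProductSpace ℂ S] [CompleteSpace S]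
  [NormedAddCommGroup S'] [InnerProductSpace ℂ S'] [CompleteSpace S']

/-- Positivity of a matrix of operators, regarded as an operator on the
  `n`-fold Hilbert space direct sum. -/
def MatPos {n : ℕ} (A : Matrix (Fin n) (Fin n) (H →L[ℂ] H)) : Prop :=
  ∀ ξ : Fin n → H, 0 ≤ ∑ i, ∑ j, (inner ℂ (ξ i) (A i j (ξ j)) : ℂ)

/-- The norm of a matrix of operators, regarded as an operator on the
  `n`-fold Hilbert space direct sum. -/
def matNorm {n : ℕ} (A : Matrix (Fin n) (Fin n) (H →L[ℂ] K)) : ℝ :=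
  sSup { r : ℝ | ∃ ξ : Fin n → H, (∑ i, ‖ξ i‖ ^ 2) ≤ 1 ∧
    r = Real.sqrt (∑ i, ‖∑ j, A i j (ξ j)‖ ^ 2) }

/-- The σ-weak (weak*) topology on `B(H)`: the initial topology induced by the
functionals `T ↦ ∑' n, ⟪ξ n, T (η n)⟫` with `(ξ n)`, `(η n)` square-summable. -/
def sigmaWeak : TopologicalSpace (H →L[ℂ] H) :=
  ⨅ (p : {q : (ℕ → H) × (ℕ → H) //
      Summable (fun n => ‖q.1 n‖ ^ 2) ∧ Summable (fun n => ‖q.2 n‖ ^ 2)}),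
    TopologicalSpace.induced
      (fun T : H →L[ℂ] H => ∑' n, (inner ℂ (p.1.1 n) (T (p.1.2 n)) : ℂ)) inferInstance

/-- Normality (weak*-weak* continuity) of a map on a subset `M` of `B(H)`. -/
def NormalOn (φ : (H →L[ℂ] H) → (K →L[ℂ] K)) (M : Set (H →L[ℂ] H)) : Prop :=
  @ContinuousOn _ _ sigmaWeak sigmaWeak φ M

/-- Complete positivity of `φ` on the subset `M`. -/
def IsCPOn (φ : (H →L[ℂ] H) → (K →L[ℂ] K)) (M : Set (H →L[ℂ] H)) : Prop :=
  ∀ (n : ℕ) (A : Matrix (Fin n) (Fin n) (H →L[ℂ] H)),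
    (∀ i j, A i j ∈ M) → MatPos A → MatPos (A.map φ)

/-- Linearity of `φ` on the subset `M`. -/
def IsLinearOn (φ : (H →L[ℂ] H) → (K →L[ℂ] K)) (M : Set (H →L[ℂ] H)) : Prop :=
  (∀ x ∈ M, ∀ y ∈ M, φ (x + y) = φ x + φ y) ∧
    ∀ (c : ℂ), ∀ x ∈ M, φ (c • x) = c • φ x

/-- A quantum channel in the Heisenberg picture: a normal unital completely positive
map from a von Neumann algebra `M` (with unit `u`) into `B(K)` (`φ u = e`, where `e`
is the relevant unit of the target). -/
def IsChannel (φ : (H →L[ℂ] H) → (K →L[ℂ] K)) (M : Set (H →L[ℂ] H))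
    (u : H →L[ℂ] H) (e : K →L[ℂ] K) : Prop :=
  IsLinearOn φ M ∧ IsCPOn φ M ∧ NormalOn φ M ∧ φ u = e

/-- The completely bounded norm of `φ`, restricted to the domain `M`. -/
def cbNormOn (φ : (H →L[ℂ] H) → (K →L[ℂ] K)) (M : Set (H →L[ℂ] H)) : ℝ :=
  sSup { r : ℝ | ∃ (n : ℕ) (A : Matrix (Fin n) (Fin n) (H →L[ℂ] H)),
    (∀ i j, A i j ∈ M) ∧ matNorm A ≤ 1 ∧ r = matNorm (A.map φ) }

/-- The commutant of `N` inside the corner algebra `P B(H) P ≅ B(PH)`. -/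
def commutantIn (P : H →L[ℂ] H) (N : Set (H →L[ℂ] H)) : Set (H →L[ℂ] H) :=
  { X | P * X * P = X ∧ ∀ Y ∈ N, X * Y = Y * X }

/-- `N` is a von Neumann subalgebra of the corner `B(PH)` (with unit `P`);
for `P = 1` this says that `N` is a von Neumann algebra on `H`. -/
def IsVNAOn (P : H →L[ℂ] H) (N : Set (H →L[ℂ] H)) : Prop :=
  P ∈ N ∧ (∀ X ∈ N, P * X * P = X) ∧
  (∀ X ∈ N, ∀ Y ∈ N, X + Y ∈ N) ∧ (∀ X ∈ N, ∀ Y ∈ N, X * Y ∈ N) ∧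
  (∀ (c : ℂ), ∀ X ∈ N, c • X ∈ N) ∧ (∀ X ∈ N, star X ∈ N) ∧
  commutantIn P (commutantIn P N) = N

/-- `P` is an orthogonal projection. -/
def IsProjn (P : H →L[ℂ] H) : Prop := IsSelfAdjoint P ∧ P * P = P

/-- A normal representation of the algebra `M` (with unit `u`): a normal unital
`*`-homomorphism with `π u = e`. -/
def IsNormalRep (π : (H →L[ℂ] H) → (K →L[ℂ] K)) (M : Set (H →L[ℂ] H))
    (u : H →L[ℂ] H) (e : K →L[ℂ] K) : Prop :=
  IsLinearOn π M ∧ (∀ X ∈ M, ∀ Y ∈ M, π (X * Y) = π X * π Y) ∧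
  (∀ X ∈ M, π (star X) = star (π X)) ∧ NormalOn π M ∧ π u = e

/-- `(π, V, Hd)` is a Stinespring triple for the channel `E : M → B(S)`. -/
def IsStinespring (M : Set (S' →L[ℂ] S')) (E : (S' →L[ℂ] S') → (S →L[ℂ] S))
    (π : (S' →L[ℂ] S') → (H →L[ℂ] H)) (V : S →L[ℂ] H) : Prop :=
  IsNormalRep π M 1 1 ∧ (adjoint V ∘L V = ContinuousLinearMap.id ℂ S) ∧
  ∀ X ∈ M, E X = adjoint V ∘L π X ∘L V

/-- The complementary channel associated with a Stinespring triple `(π, V, Hd)`: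
the map `Y ↦ V* Y V`, defined on the commutant `π(M)'`. -/
def complementMap (V : S →L[ℂ] H) : (H →L[ℂ] H) → (S →L[ℂ] S) :=
  fun Y => adjoint V ∘L Y ∘L V

/-- The domain `π(M)'` of the complementary channel. -/
def complementDom (M : Set (S' →L[ℂ] S')) (π : (S' →L[ℂ] S') → (H →L[ℂ] H)) :
    Set (H →L[ℂ] H) :=
  commutantIn 1 (π '' M)

/-- `N ⊆ B(PS)` is private for `E : M → B(S)` with respect to `P`:
`C_P ∘ E (M) ⊆ N'`. -/
def PrivateFor (E : (H →L[ℂ] H) → (S →L[ℂ] S)) (M : Set (H →L[ℂ] H))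
    (P : S →L[ℂ] S) (N : Set (S →L[ℂ] S)) : Prop :=
  ∀ X ∈ M, P * E X * P ∈ commutantIn P N

/-- `N ⊆ B(PS)` is ε-private for `E : M → B(S)` with respect to `P`. -/
def EpsPrivateFor (ε : ℝ) (E : (H →L[ℂ] H) → (S →L[ℂ] S)) (M : Set (H →L[ℂ] H))
    (P : S →L[ℂ] S) (N : Set (S →L[ℂ] S)) : Prop :=
  ∃ F : (H →L[ℂ] H) → (S →L[ℂ] S), IsChannel F M 1 1 ∧
    cbNormOn (fun X => E X - F X) M < ε ∧ PrivateFor F M P N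

/-- `N ⊆ B(PS)` is correctable for `E : M → B(S)` with respect to `P`:
there is a channel `R : N → M` with `C_P ∘ E ∘ R = id_N`. -/
def CorrectableFor (E : (H →L[ℂ] H) → (S →L[ℂ] S)) (M : Set (H →L[ℂ] H))
    (P : S →L[ℂ] S) (N : Set (S →L[ℂ] S)) : Prop :=
  ∃ R : (S →L[ℂ] S) → (H →L[ℂ] H), IsChannel R N P 1 ∧ (∀ T ∈ N, R T ∈ M) ∧
    ∀ T ∈ N, P * E (R T) * P = T

/-- `N ⊆ B(PS)` is ε-correctable for `E : M → B(S)` with respect to `P`. -/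
def EpsCorrectableFor (ε : ℝ) (E : (H →L[ℂ] H) → (S →L[ℂ] S)) (M : Set (H →L[ℂ] H))
    (P : S →L[ℂ] S) (N : Set (S →L[ℂ] S)) : Prop :=
  ∃ R : (S →L[ℂ] S) → (H →L[ℂ] H), IsChannel R N P 1 ∧ (∀ T ∈ N, R T ∈ M) ∧
    cbNormOn (fun T => P * E (R T) * P - T) N < ε

end QPC

namespace QPC

variable {S S' H₁ H₂ : Type*}
  [NormedAddCommGroup S] [InnerProductSpace ℂ S]
  [NormedAddCommGroup S'] [InnerProductSpace ℂ S']
  [NormedAddCommGroup H₁] [InnerProductSpace ℂ H₁]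
  [NormedAddCommGroup H₂] [InnerProductSpace ℂ H₂]

theorem adjoint_comp_eq_of_comp_eq [CompleteSpace H₁] [CompleteSpace H₂]
    {U : H₁ →L[ℂ] H₂} {A : H₁ →L[ℂ] H₁} {B : H₂ →L[ℂ] H₂}
    (h : U ∘L A = B ∘L U) : adjoint U ∘L adjoint B = adjoint A ∘L adjoint U := by
  simpa only [adjoint_comp] using (congrArg adjoint h).symm

theorem adjoint_intertwines [CompleteSpace S'] [CompleteSpace H₁] [CompleteSpace H₂]
    {M : Set (S' →L[ℂ] S')} (hM : ∀ X ∈ M, star X ∈ M)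
    {π₁ : (S' →L[ℂ] S') → (H₁ →L[ℂ] H₁)} {π₂ : (S' →L[ℂ] S') → (H₂ →L[ℂ] H₂)}
    (hπ₁ : ∀ X ∈ M, π₁ (star X) = star (π₁ X)) (hπ₂ : ∀ X ∈ M, π₂ (star X) = star (π₂ X))
    {U : H₁ →L[ℂ] H₂} (hU : ∀ X ∈ M, U ∘L π₁ X = π₂ X ∘L U) :
    ∀ X ∈ M, adjoint U ∘L π₂ X = π₁ X ∘L adjoint U := by
  intro X hX
  have h := hU (star X) (hM X hX)
  rw [hπ₁ X hX, hπ₂ X hX] at h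
  simpa only [star_eq_adjoint, adjoint_adjoint] using adjoint_comp_eq_of_comp_eq h

theorem comp_comp_mem_complementDom {M : Set (S' →L[ℂ] S')}
    {π₁ : (S' →L[ℂ] S') → (H₁ →L[ℂ] H₁)} {π₂ : (S' →L[ℂ] S') → (H₂ →L[ℂ] H₂)}
    {A : H₁ →L[ℂ] H₂} {B : H₂ →L[ℂ] H₁}
    (hA : ∀ X ∈ M, A ∘L π₁ X = π₂ X ∘L A) (hB : ∀ X ∈ M, B ∘L π₂ X = π₁ X ∘L B)
    {Y : H₁ →L[ℂ] H₁} (hY : Y ∈ complementDom M π₁) :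
    A ∘L Y ∘L B ∈ complementDom M π₂ := by
  refine ⟨by simp only [one_mul, mul_one], ?_⟩
  rintro _ ⟨X, hX, rfl⟩
  have hYX : Y ∘L π₁ X = π₁ X ∘L Y := hY.2 (π₁ X) ⟨X, hX, rfl⟩
  show (A ∘L Y ∘L B) ∘L π₂ X = π₂ X ∘L (A ∘L Y ∘L B)
  calc (A ∘L Y ∘L B) ∘L π₂ X = A ∘L (Y ∘L π₁ X) ∘L B := by
        simp only [comp_assoc, hB X hX]
    _ = (A ∘L π₁ X) ∘L Y ∘L B := by simp only [hYX, comp_assoc]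
    _ = π₂ X ∘L (A ∘L Y ∘L B) := by rw [hA X hX, comp_assoc]

theorem complementMap_comp [CompleteSpace S] [CompleteSpace H₁] [CompleteSpace H₂]
    (W : H₁ →L[ℂ] H₂) (V : S →L[ℂ] H₁) (Y : H₂ →L[ℂ] H₂) :
    complementMap (W ∘L V) Y = complementMap V (adjoint W ∘L Y ∘L W) := by
  simp only [complementMap, adjoint_comp, comp_assoc]

end QPC

open QPC in
theorem complements_related_by_partial_isometry_general
    {S S' H₁ H₂ : Type}
    [NormedAddCommGroup S] [InnerProductSpace ℂ S] [CompleteSpace S]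
    [NormedAddCommGroup S'] [InnerProductSpace ℂ S'] [CompleteSpace S']
    [NormedAddCommGroup H₁] [InnerProductSpace ℂ H₁] [CompleteSpace H₁]
    [NormedAddCommGroup H₂] [InnerProductSpace ℂ H₂] [CompleteSpace H₂]
    (M : Set (S' →L[ℂ] S')) (hM : IsVNAOn 1 M)
    (E : (S' →L[ℂ] S') → (S →L[ℂ] S))
    (π₁ : (S' →L[ℂ] S') → (H₁ →L[ℂ] H₁)) (V₁ : S →L[ℂ] H₁)
    (π₂ : (S' →L[ℂ] S') → (H₂ →L[ℂ] H₂)) (V₂ : S →L[ℂ] H₂)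
    (h₁ : IsStinespring M E π₁ V₁) (h₂ : IsStinespring M E π₂ V₂)
    (U : H₁ →L[ℂ] H₂)
    (hUV₁ : U ∘L V₁ = V₂) (hUV₂ : adjoint U ∘L V₂ = V₁)
    (hUπ : ∀ X ∈ M, U ∘L π₁ X = π₂ X ∘L U) :
    (∀ Y ∈ complementDom M π₁, U ∘L Y ∘L adjoint U ∈ complementDom M π₂) ∧
    (∀ Y ∈ complementDom M π₂, adjoint U ∘L Y ∘L U ∈ complementDom M π₁) ∧
    (∀ Y ∈ complementDom M π₁,
        complementMap V₁ Y = complementMap V₂ (U ∘L Y ∘L adjoint U)) ∧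
    (∀ Y ∈ complementDom M π₂,
        complementMap V₂ Y = complementMap V₁ (adjoint U ∘L Y ∘L U)) := by
  have hU'π : ∀ X ∈ M, adjoint U ∘L π₂ X = π₁ X ∘L adjoint U :=
    adjoint_intertwines hM.2.2.2.2.2.1 h₁.1.2.2.1 h₂.1.2.2.1 hUπ
  refine ⟨fun Y hY => comp_comp_mem_complementDom hUπ hU'π hY,
    fun Y hY => comp_comp_mem_complementDom hU'π hUπ hY, fun Y _ => ?_, fun Y _ => ?_⟩
  · rw [← hUV₂, complementMap_comp, adjoint_adjoint]
  · rw [← hUV₁, complementMap_comp]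

open QPC in
/-- Remark: complementary channels for two Stinespring triples.
Given Stinespring triples `(π₁, V₁, H₁)` and `(π₂, V₂, H₂)` for the channel `E` and a
partial isometry `U : H₁ → H₂` with `U V₁ = V₂`, `U* V₂ = V₁` and `U π₁(X) = π₂(X) U`
for `X ∈ M`, we have `C_U(π₁(M)') ⊆ π₂(M)'`, `C_{U*}(π₂(M)') ⊆ π₁(M)'`, and the
associated complementary channels satisfy `F₁ = F₂ ∘ C_U` and `F₂ = F₁ ∘ C_{U*}`. -/
theorem complements_related_by_partial_isometry
    {S S' H₁ H₂ : Type}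
    [NormedAddCommGroup S] [InnerProductSpace ℂ S] [CompleteSpace S]
    [NormedAddCommGroup S'] [InnerProductSpace ℂ S'] [CompleteSpace S']
    [NormedAddCommGroup H₁] [InnerProductSpace ℂ H₁] [CompleteSpace H₁]
    [NormedAddCommGroup H₂] [InnerProductSpace ℂ H₂] [CompleteSpace H₂]
    (M : Set (S' →L[ℂ] S')) (hM : IsVNAOn 1 M)
    (E : (S' →L[ℂ] S') → (S →L[ℂ] S)) (hE : IsChannel E M 1 1)
    (π₁ : (S' →L[ℂ] S') → (H₁ →L[ℂ] H₁)) (V₁ : S →L[ℂ] H₁)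
    (π₂ : (S' →L[ℂ] S') → (H₂ →L[ℂ] H₂)) (V₂ : S →L[ℂ] H₂)
    (h₁ : IsStinespring M E π₁ V₁) (h₂ : IsStinespring M E π₂ V₂)
    (U : H₁ →L[ℂ] H₂) (hU : U ∘L adjoint U ∘L U = U)
    (hUV₁ : U ∘L V₁ = V₂) (hUV₂ : adjoint U ∘L V₂ = V₁)
    (hUπ : ∀ X ∈ M, U ∘L π₁ X = π₂ X ∘L U) :
    (∀ Y ∈ complementDom M π₁, U ∘L Y ∘L adjoint U ∈ complementDom M π₂) ∧
    (∀ Y ∈ complementDom M π₂, adjoint U ∘L Y ∘L U ∈ complementDom M π₁) ∧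
    (∀ Y ∈ complementDom M π₁,
        complementMap V₁ Y = complementMap V₂ (U ∘L Y ∘L adjoint U)) ∧
    (∀ Y ∈ complementDom M π₂,
        complementMap V₂ Y = complementMap V₁ (adjoint U ∘L Y ∘L U)) :=
  complements_related_by_partial_isometry_general M hM E π₁ V₁ π₂ V₂ h₁ h₂ U hUV₁ hUV₂ hUπ
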